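/- arXiv:2011.06435 — 9 statements merged into one kernel-verified Lean document; each statement's English description precedes it below -/
import Mathlib

section
/- If S is the Seidel matrix of a graph on n vertices (S = J - I - 2A where A is the adjacency matrix), then the rank of S is at least n - 1. -/
open Matrix

/-- The Seidel matrix of a simple graph: `S = J - I - 2A`. -/
def seidelMatrix {n : ℕ} (G : SimpleGraph (Fin n)) [DecidableRel G.Adj] :
    Matrix (Fin n) (Fin n) ℤ :=
  Matrix.of fun i j => if i = j then 0 else if G.Adj i j then -1 else 1

/-!
Modulo 2 the Seidel matrix is `J - I = I + J`, whose determinant is `1 + n` by the matrix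
determinant lemma. So for even `n` the integer determinant is odd, hence nonzero, and `S` has full
rank; for odd `n` the same applies to any principal submatrix of size `n - 1`.
-/

namespace Matrix

variable {ι : Type*} [DecidableEq ι]

theorem det_one_add_of_one [Fintype ι] {R : Type*} [CommRing R] :
    (1 + of fun _ _ : ι => (1 : R)).det = 1 + (Fintype.card ι : R) := by
  have hJ : (of fun _ _ : ι => (1 : R)) =
      replicateCol Unit (1 : ι → R) * replicateRow Unit (1 : ι → R) := by
    ext i j
    simp [← vecMulVec_eq, vecMulVec_apply]
  rw [hJ, det_one_add_replicateCol_mul_replicateRow]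
  simp [dotProduct]

theorem map_intCast_zmod_two_of_even_diag_of_odd_offDiag {C : Matrix ι ι ℤ}
    (hdiag : ∀ i, Even (C i i)) (hoff : Pairwise fun i j => Odd (C i j)) :
    C.map (Int.cast : ℤ → ZMod 2) = 1 + of fun _ _ => 1 := by
  ext i j
  rcases eq_or_ne i j with rfl | hij
  · rw [map_apply, (ZMod.intCast_eq_zero_iff_even).mpr (hdiag i)]
    simp only [add_apply, one_apply_eq, of_apply]
    decide
  · simp [(ZMod.intCast_eq_one_iff_odd).mpr (hoff hij), one_apply_ne hij]

variable [Fintype ι]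

theorem det_ne_zero_of_even_diag_of_odd_offDiag {C : Matrix ι ι ℤ}
    (hdiag : ∀ i, Even (C i i)) (hoff : Pairwise fun i j => Odd (C i j))
    (hcard : Even (Fintype.card ι)) : C.det ≠ 0 := by
  intro hdet
  have hmod : ((C.det : ℤ) : ZMod 2) = 1 + Fintype.card ι := by
    rw [Int.cast_det, map_intCast_zmod_two_of_even_diag_of_odd_offDiag hdiag hoff,
      det_one_add_of_one]
  rw [hdet, (ZMod.natCast_eq_zero_iff_even).mpr hcard] at hmod
  exact absurd hmod (by decide)

theorem card_sub_one_le_rank_of_even_diag_of_odd_offDiag {C : Matrix ι ι ℤ}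
    (hdiag : ∀ i, Even (C i i)) (hoff : Pairwise fun i j => Odd (C i j)) :
    Fintype.card ι - 1 ≤ C.rank := by
  rcases Nat.even_or_odd (Fintype.card ι) with hcard | hcard
  · rw [rank_of_det_ne_zero (det_ne_zero_of_even_diag_of_odd_offDiag hdiag hoff hcard)]
    exact Nat.sub_le _ _
  obtain ⟨i₀⟩ : Nonempty ι := Fintype.card_pos_iff.mp hcard.pos
  let B : Matrix {i // i ≠ i₀} {i // i ≠ i₀} ℤ := C.submatrix (↑) (↑)
  have hcardB : Fintype.card {i // i ≠ i₀} = Fintype.card ι - 1 := Fintype.card_subtype_compl _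
  have hdetB : B.det ≠ 0 := by
    refine det_ne_zero_of_even_diag_of_odd_offDiag (fun i => hdiag i)
      (fun i j hij => hoff (Subtype.coe_injective.ne hij)) ?_
    rw [hcardB]
    exact Nat.Odd.sub_odd hcard odd_one
  calc Fintype.card ι - 1 = B.rank := by rw [rank_of_det_ne_zero hdetB, hcardB]
    _ ≤ C.rank := rank_submatrix_le C _ _

end Matrix

theorem seidel_rank_ge {n : ℕ} (G : SimpleGraph (Fin n)) [DecidableRel G.Adj] :
    n - 1 ≤ (seidelMatrix G).rank := by
  have hdiag : ∀ i, Even (seidelMatrix G i i) := fun i => by simp [seidelMatrix]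
  have hoff : Pairwise fun i j => Odd (seidelMatrix G i j) := fun i j hij => by
    by_cases hadj : G.Adj i j <;> simp [seidelMatrix, hij, hadj]
  simpa using card_sub_one_le_rank_of_even_diag_of_odd_offDiag hdiag hoff
end

section
/- Let S be the Seidel matrix of a graph on n vertices with rank S = n - 1, and let φ be an integer vector spanning the nullspace of S whose entries have greatest common divisor 1. Then every entry of φ is odd. -/
open Matrix Finset

theorem seidel_null_vector_entries_odd {n : ℕ} (G : SimpleGraph (Fin n))
    [DecidableRel G.Adj] (φ : Fin n → ℤ)
    (hrank : (seidelMatrix G).rank = n - 1)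
    (hnull : (seidelMatrix G).mulVec φ = 0)
    (hgcd : Finset.univ.gcd φ = 1) :
    ∀ i, Odd (φ i) := by
  -- key: mod 2, every entry equals the total sum
  have key : ∀ i : Fin n, ((φ i : ZMod 2)) = ∑ j, (φ j : ZMod 2) := by
    intro i
    have h := congrFun hnull i
    simp only [Matrix.mulVec, dotProduct, Pi.zero_apply] at h
    have h2 : ((∑ j, seidelMatrix G i j * φ j : ℤ) : ZMod 2) = 0 := by
      rw [h]; simp
    push_cast at h2
    have hcoef : ∀ j, ((seidelMatrix G i j : ℤ) : ZMod 2) * (φ j : ZMod 2)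
        = if i = j then 0 else (φ j : ZMod 2) := by
      intro j
      simp only [seidelMatrix, Matrix.of_apply]
      split_ifs <;> push_cast <;> simp [CharTwo.neg_eq]
    rw [Finset.sum_congr rfl (fun j _ => hcoef j)] at h2
    have herase : (∑ j ∈ univ.erase i, (φ j : ZMod 2)) = 0 := by
      calc ∑ j ∈ univ.erase i, (φ j : ZMod 2)
          = ∑ j ∈ univ.erase i, (if i = j then 0 else (φ j : ZMod 2)) :=
            Finset.sum_congr rfl (fun j hj => by
              rw [if_neg (Ne.symm (Finset.ne_of_mem_erase hj))])
        _ = ∑ j, (if i = j then 0 else (φ j : ZMod 2)) :=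
            Finset.sum_erase _ (by simp)
        _ = 0 := h2
    have hsplit : (∑ j, (φ j : ZMod 2))
        = (φ i : ZMod 2) + ∑ j ∈ univ.erase i, (φ j : ZMod 2) :=
      (Finset.add_sum_erase _ _ (mem_univ i)).symm
    rw [hsplit, herase, add_zero]
  intro i
  rw [← Int.not_even_iff_odd]
  intro hev
  have hi0 : ((φ i : ZMod 2)) = 0 := by
    rcases hev with ⟨k, hk⟩
    rw [hk]; push_cast; exact CharTwo.add_self_eq_zero _
  have hall : ∀ j : Fin n, ((φ j : ZMod 2)) = 0 := by
    intro j; rw [key j, ← key i, hi0]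
  have hdvd : (2 : ℤ) ∣ Finset.univ.gcd φ := by
    apply Finset.dvd_gcd
    intro j _
    have := hall j
    rwa [ZMod.intCast_zmod_eq_zero_iff_dvd] at this
  rw [hgcd] at hdvd
  norm_num at hdvd
end

section
/- Let G be a graph on vertices v_1,...,v_n with singular Seidel matrix S of rank n-1, and let φ be the primitive integer nullspace vector of S. Then for all 1 ≤ i, j ≤ n, φ_i - φ_j ≡ 2(d(v_i) - d(v_j)) (mod 4), where d denotes vertex degree. -/
/-!
Row `v` of `S φ = 0` reads `φ v = ∑ φ - 2 ∑_{k ∈ N(v)} φ k`. Hence all entries of `φ` are congruent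
to `∑ φ` mod 2, and primitivity makes them all odd. Then `∑_{k ∈ N(v)} φ k ≡ d(v) (mod 2)`, so
`2 ∑_{k ∈ N(v)} φ k ≡ 2 d(v) (mod 4)`, and subtracting the row equations of `i` and `j` gives the claim.
-/

open Matrix Finset

section

variable {n : ℕ} (G : SimpleGraph (Fin n)) [DecidableRel G.Adj]

theorem seidelMatrix_apply_eq (i j : Fin n) :
    seidelMatrix G i j = 1 - (if i = j then 1 else 0) - 2 * (if G.Adj i j then 1 else 0) := by
  by_cases hij : i = j
  · subst hij; simp [seidelMatrix]
  · by_cases hadj : G.Adj i j <;> simp [seidelMatrix, hij, hadj]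

theorem seidelMatrix_mulVec_apply (φ : Fin n → ℤ) (v : Fin n) :
    (seidelMatrix G *ᵥ φ) v = ∑ k, φ k - φ v - 2 * ∑ k ∈ G.neighborFinset v, φ k := by
  simp only [mulVec, dotProduct, seidelMatrix_apply_eq, sub_mul, one_mul, sum_sub_distrib,
    sum_ite_eq, mem_univ, if_true, zero_mul, mul_assoc, ← mul_sum, ite_mul,
    SimpleGraph.neighborFinset_eq_filter, sum_filter]

theorem eq_sub_two_mul_sum_neighborFinset_of_seidelMatrix_mulVec_eq_zero {φ : Fin n → ℤ}
    (hnull : seidelMatrix G *ᵥ φ = 0) (v : Fin n) :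
    φ v = ∑ k, φ k - 2 * ∑ k ∈ G.neighborFinset v, φ k := by
  have h := seidelMatrix_mulVec_apply G φ v
  rw [hnull, Pi.zero_apply] at h
  linarith

end

theorem Int.odd_of_gcd_eq_one_of_modEq_two {ι : Type*} {s : Finset ι} {f : ι → ℤ} {c : ℤ}
    (hgcd : s.gcd f = 1) (hf : ∀ i ∈ s, f i ≡ c [ZMOD 2]) {i : ι} (hi : i ∈ s) :
    Odd (f i) := by
  have hc : c % 2 = 1 := by
    rcases Int.emod_two_eq_zero_or_one c with hc | hc
    · have h2 : (2 : ℤ) ∣ s.gcd f :=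
        Finset.dvd_gcd fun j hj => Int.dvd_of_emod_eq_zero (Eq.trans (hf j hj) hc)
      rw [hgcd] at h2
      norm_num at h2
    · exact hc
  exact Int.odd_iff.mpr (Eq.trans (hf i hi) hc)

theorem Int.sum_modEq_card_of_odd {ι : Type*} {s : Finset ι} {f : ι → ℤ}
    (hf : ∀ i ∈ s, Odd (f i)) : ∑ i ∈ s, f i ≡ #s [ZMOD 2] := by
  rw [card_eq_sum_ones, Nat.cast_sum, Nat.cast_one]
  exact Int.ModEq.sum fun i hi => Int.odd_iff.mp (hf i hi)

theorem seidel_null_vector_mod_four_general {n : ℕ} (G : SimpleGraph (Fin n))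
    [DecidableRel G.Adj] (φ : Fin n → ℤ)
    (hnull : (seidelMatrix G).mulVec φ = 0)
    (hgcd : Finset.univ.gcd φ = 1) :
    ∀ i j, φ i - φ j ≡ 2 * ((G.degree i : ℤ) - (G.degree j : ℤ)) [ZMOD 4] := by
  intro i j
  have hrow := eq_sub_two_mul_sum_neighborFinset_of_seidelMatrix_mulVec_eq_zero G hnull
  have hodd : ∀ v, Odd (φ v) := fun v =>
    Int.odd_of_gcd_eq_one_of_modEq_two (c := ∑ k, φ k) hgcd
      (fun k _ => Int.modEq_iff_dvd.mpr ⟨∑ l ∈ G.neighborFinset k, φ l, by linarith [hrow k]⟩)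
      (mem_univ v)
  have hdeg : ∀ v, 2 * ∑ k ∈ G.neighborFinset v, φ k ≡ 2 * G.degree v [ZMOD 4] := fun v => by
    have h := (Int.sum_modEq_card_of_odd fun k (_ : k ∈ G.neighborFinset v) => hodd k).mul_left'
      (c := 2)
    rwa [SimpleGraph.card_neighborFinset_eq_degree] at h
  calc φ i - φ j = 2 * ∑ k ∈ G.neighborFinset j, φ k - 2 * ∑ k ∈ G.neighborFinset i, φ k := by
        linarith [hrow i, hrow j]
    _ ≡ 2 * G.degree j - 2 * G.degree i [ZMOD 4] := (hdeg j).sub (hdeg i)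
    _ ≡ 2 * ((G.degree i : ℤ) - (G.degree j : ℤ)) [ZMOD 4] :=
        Int.modEq_iff_dvd.mpr ⟨G.degree i - G.degree j, by ring⟩

theorem seidel_null_vector_mod_four {n : ℕ} (G : SimpleGraph (Fin n))
    [DecidableRel G.Adj] (φ : Fin n → ℤ)
    (hrank : (seidelMatrix G).rank = n - 1)
    (hnull : (seidelMatrix G).mulVec φ = 0)
    (hgcd : Finset.univ.gcd φ = 1) :
    ∀ i j, φ i - φ j ≡ 2 * ((G.degree i : ℤ) - (G.degree j : ℤ)) [ZMOD 4] :=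
  seidel_null_vector_mod_four_general G φ hnull hgcd
end

section
/- If G is a graph of order n whose Seidel matrix is singular, then n ≡ 1 (mod 4). -/
open Matrix

/-!
Modulo 4, every Seidel matrix of order `n` has the same determinant as that of the empty graph,
`J - I` (the adjacency matrix of the complete graph), and `det (J - I) = (-1) ^ (n - 1) (n - 1)`; so `det S = 0` forces `n ≡ 1 (mod 4)`.
In the Leibniz expansion, a permutation with a fixed point contributes nothing, and a
fixed-point-free involution `σ` contributes `sign σ`, its term being a product of factors
`S i (σ i) * S (σ i) i = 1`. Every other `σ` is paired with `σ⁻¹ ≠ σ`, which by symmetry contributes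
the same term `± 1`; the pair contributes `± 2`, and `2 = -2` in `ZMod 4`.
-/

open Equiv

theorem ZMod.two_mul_eq_two_mul_of_sq_eq_one :
    ∀ x y : ZMod 4, x ^ 2 = 1 → y ^ 2 = 1 → 2 * x = 2 * y := by
  decide

namespace Matrix

variable {ι R : Type*}

/-- Off the diagonal, `M i j ^ 2 = 1` stands for `M i j = ± 1` (the two agree over `ℤ` and
`ZMod 4`). -/
structure IsSeidel [MonoidWithZero R] (M : Matrix ι ι R) : Prop where
  isSymm : M.IsSymm
  diag_eq_zero : ∀ i, M i i = 0
  sq_eq_one : ∀ ⦃i j⦄, i ≠ j → M i j ^ 2 = 1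

theorem IsSymm.prod_perm_inv_apply [Fintype ι] [CommMonoid R] {M : Matrix ι ι R}
    (hM : M.IsSymm) (σ : Perm ι) : ∏ i, M (σ⁻¹ i) i = ∏ i, M (σ i) i := by
  rw [← Equiv.prod_comp σ]
  exact Fintype.prod_congr _ _ fun i => by simpa using hM.apply (σ i) i

namespace IsSeidel

variable [CommMonoidWithZero R] {M : Matrix ι ι R}

theorem map {S F : Type*} [CommMonoidWithZero S] [FunLike F R S] [MonoidWithZeroHomClass F R S]
    (hM : M.IsSeidel) (f : F) : (M.map f).IsSeidel where
  isSymm := hM.isSymm.map f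
  diag_eq_zero i := by simp [hM.diag_eq_zero]
  sq_eq_one i j hij := by simp [← map_pow, hM.sq_eq_one hij]

variable [Fintype ι]

theorem prod_perm_apply_eq_zero (hM : M.IsSeidel) {σ : Perm ι} {i : ι} (hi : σ i = i) :
    ∏ j, M (σ j) j = 0 :=
  Finset.prod_eq_zero (Finset.mem_univ i) (by rw [hi, hM.diag_eq_zero])

theorem prod_perm_apply_sq_eq_one (hM : M.IsSeidel) {σ : Perm ι} (hσ : ∀ i, σ i ≠ i) :
    (∏ i, M (σ i) i) ^ 2 = 1 := by
  rw [← Finset.prod_pow]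
  exact Finset.prod_eq_one fun i _ => hM.sq_eq_one (hσ i)

theorem prod_perm_apply_eq_one_of_involutive (hM : M.IsSeidel) {σ : Perm ι}
    (hinv : Function.Involutive σ) (hσ : ∀ i, σ i ≠ i) : ∏ i, M (σ i) i = 1 :=
  Finset.prod_ninvolution σ
    (fun i => by rw [hinv i, hM.isSymm.apply i (σ i), ← sq, hM.sq_eq_one (hσ i).symm])
    (fun i _ => hσ i) (fun _ => Finset.mem_univ _) hinv

end IsSeidel

theorem IsSeidel.det_eq [Fintype ι] [DecidableEq ι] {M N : Matrix ι ι (ZMod 4)}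
    (hM : M.IsSeidel) (hN : N.IsSeidel) : M.det = N.det := by
  set d : Perm ι → ZMod 4 := fun σ => ∏ i, M (σ i) i - ∏ i, N (σ i) i
  have hd_inv (σ : Perm ι) : d σ⁻¹ = d σ := by
    simp only [d, hM.isSymm.prod_perm_inv_apply, hN.isSymm.prod_perm_inv_apply]
  have hd_fixed {σ : Perm ι} {i : ι} (hi : σ i = i) : d σ = 0 := by
    simp only [d, hM.prod_perm_apply_eq_zero hi, hN.prod_perm_apply_eq_zero hi, sub_self]
  have hd_add_self (σ : Perm ι) : d σ + d σ = 0 := by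
    by_cases hσ : ∃ i, σ i = i
    · obtain ⟨i, hi⟩ := hσ
      rw [hd_fixed hi, add_zero]
    · push Not at hσ
      linear_combination ZMod.two_mul_eq_two_mul_of_sq_eq_one _ _
        (hM.prod_perm_apply_sq_eq_one hσ) (hN.prod_perm_apply_sq_eq_one hσ)
  have hd_involutive {σ : Perm ι} (hinv : σ⁻¹ = σ) : d σ = 0 := by
    by_cases hσ : ∃ i, σ i = i
    · obtain ⟨i, hi⟩ := hσ
      exact hd_fixed hi
    · push Not at hσ
      have hσσ : Function.Involutive σ := fun i => by
        nth_rewrite 1 [← hinv]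
        exact σ.symm_apply_apply i
      simp only [d, hM.prod_perm_apply_eq_one_of_involutive hσσ hσ,
        hN.prod_perm_apply_eq_one_of_involutive hσσ hσ, sub_self]
  rw [← sub_eq_zero, det_apply', det_apply', ← Finset.sum_sub_distrib]
  simp_rw [← mul_sub]
  change ∑ σ : Perm ι, ((Perm.sign σ : ℤ) : ZMod 4) * d σ = 0
  refine Finset.sum_ninvolution (· ⁻¹) (fun σ => ?_) (fun σ hσ hinv => ?_)
    (fun _ => Finset.mem_univ _) inv_inv
  · rw [Perm.sign_inv, hd_inv, ← mul_add, hd_add_self, mul_zero]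
  · exact hσ (by rw [hd_involutive hinv, mul_zero])

end Matrix

namespace SimpleGraph

variable {V R : Type*} [DecidableEq V]

theorem isSeidel_adjMatrix_top [CommRing R] : ((⊤ : SimpleGraph V).adjMatrix R).IsSeidel where
  isSymm := isSymm_adjMatrix _
  diag_eq_zero i := by simp
  sq_eq_one i j hij := by simp [hij]

theorem det_adjMatrix_top [Fintype V] [CommRing R] :
    ((⊤ : SimpleGraph V).adjMatrix R).det =
      (-1) ^ Fintype.card V * (1 - (Fintype.card V : R)) := by
  have hJ : (⊤ : SimpleGraph V).adjMatrix R =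
      -(1 - replicateCol Unit (1 : V → R) * replicateRow Unit (1 : V → R)) := by
    ext i j
    by_cases h : i = j <;> simp [h, replicateCol, replicateRow, mul_apply]
  rw [hJ, det_neg, det_one_sub_mul_comm, det_unique]
  simp [replicateRow_mul_replicateCol_apply, dotProduct]

end SimpleGraph

theorem isSeidel_seidelMatrix {n : ℕ} (G : SimpleGraph (Fin n)) [DecidableRel G.Adj] :
    (seidelMatrix G).IsSeidel where
  isSymm := by
    ext i j
    simp [seidelMatrix, eq_comm, G.adj_comm]
  diag_eq_zero i := by simp [seidelMatrix]
  sq_eq_one i j hij := by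
    by_cases h : G.Adj i j <;> simp [seidelMatrix, hij, h]

theorem seidel_singular_order_mod_four {n : ℕ} (G : SimpleGraph (Fin n))
    [DecidableRel G.Adj] (hsing : (seidelMatrix G).det = 0) :
    n % 4 = 1 := by
  have hdet : ((seidelMatrix G).map (Int.castRingHom (ZMod 4))).det = 0 := by
    rw [← RingHom.mapMatrix_apply, ← RingHom.map_det, hsing, map_zero]
  rw [((isSeidel_seidelMatrix G).map (Int.castRingHom (ZMod 4))).det_eq
    SimpleGraph.isSeidel_adjMatrix_top, SimpleGraph.det_adjMatrix_top, Fintype.card_fin,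
    (isUnit_neg_one.pow n).mul_right_eq_zero, sub_eq_zero] at hdet
  have hn : ((n : ℕ) : ZMod 4) = (1 : ℕ) := by rw [← hdet, Nat.cast_one]
  exact (ZMod.natCast_eq_natCast_iff' n 1 4).mp hn
end

section
/- Let G be a graph of order n with m edges whose Seidel matrix is singular, and let n_odd be the number of vertices of odd degree in G. Then m + n_odd ≡ (n-1)/4 (mod 4). -/
open Matrix

/-- A double sum of a symmetric function with vanishing diagonal is even. -/
lemma even_double_sum_sym {α : Type*} [DecidableEq α] (f : α → α → ℤ)
    (hsym : ∀ j k, f j k = f k j) (hdiag : ∀ j, f j j = 0) (s : Finset α) :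
    Even (∑ j ∈ s, ∑ k ∈ s, f j k) := by
  induction s using Finset.induction_on with
  | empty => simp
  | insert _ _ ha ih =>
    rename_i a s'
    rw [Finset.sum_insert ha, Finset.sum_insert ha]
    have h1 : ∑ j ∈ s', ∑ k ∈ insert a s', f j k
        = (∑ j ∈ s', f j a) + ∑ j ∈ s', ∑ k ∈ s', f j k := by
      rw [← Finset.sum_add_distrib]
      exact Finset.sum_congr rfl fun j _ => Finset.sum_insert ha
    rw [h1, hdiag]
    have h2 : ∑ j ∈ s', f j a = ∑ j ∈ s', f a j :=
      Finset.sum_congr rfl fun j _ => hsym j a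
    rw [h2]
    have : (0 : ℤ) + ∑ k ∈ s', f a k + ((∑ j ∈ s', f a j) + ∑ j ∈ s', ∑ k ∈ s', f j k)
        = 2 * (∑ k ∈ s', f a k) + ∑ j ∈ s', ∑ k ∈ s', f j k := by ring
    rw [this]
    exact (Even.mul_right even_two _).add ih

theorem seidel_singular_size_plus_odd {n : ℕ} (G : SimpleGraph (Fin n))
    [DecidableRel G.Adj]
    (hsing : (seidelMatrix G).det = 0) :
    (G.edgeFinset.card + (Finset.univ.filter fun v => Odd (G.degree v)).card) % 4
      = ((n - 1) / 4) % 4 := by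
  rcases Nat.eq_zero_or_pos n with hn0 | hn
  · subst hn0
    simp [Matrix.det_isEmpty] at hsing
  -- obtain a primitive integer kernel vector
  obtain ⟨x, hx0, hxker⟩ := (Matrix.exists_mulVec_eq_zero_iff).mpr hsing
  obtain ⟨y, hxy, hgcd⟩ := Finset.extract_gcd x ⟨⟨0, hn⟩, Finset.mem_univ _⟩
  have hc0 : Finset.univ.gcd x ≠ 0 := by
    intro h
    apply hx0
    funext i
    exact Finset.gcd_eq_zero_iff.mp h i (Finset.mem_univ i)
  have hyker : seidelMatrix G *ᵥ y = 0 := by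
    have hxy' : x = fun i => Finset.univ.gcd x * y i :=
      funext fun i => hxy i (Finset.mem_univ i)
    funext i
    have := congrFun hxker i
    rw [hxy'] at this
    simp only [Matrix.mulVec, dotProduct, Pi.zero_apply] at this ⊢
    have h2 : ∑ j, seidelMatrix G i j * (Finset.univ.gcd x * y j)
        = Finset.univ.gcd x * ∑ j, seidelMatrix G i j * y j := by
      rw [Finset.mul_sum]; exact Finset.sum_congr rfl fun j _ => by ring
    rw [h2] at this
    exact (mul_eq_zero.mp this).resolve_left hc0
    -- notation
  set σ : ℤ := ∑ i, y i with hσ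
  set t : Fin n → ℤ := fun i => ∑ j, if G.Adj i j then y j else 0 with htdef
  set d : Fin n → ℤ := fun v => (G.degree v : ℤ) with hddef
  set w : Fin n → ℤ := fun i => ∑ j, if G.Adj i j then t j else 0 with hwdef
  -- row equations
  have hrow : ∀ i, σ = y i + 2 * t i := by
    intro i
    have h := congrFun hyker i
    simp only [Matrix.mulVec, dotProduct, Pi.zero_apply] at h
    have key : ∀ j, seidelMatrix G i j * y j
        = y j - (if i = j then y j else 0) - 2 * (if G.Adj i j then y j else 0) := by
      intro j
      simp only [seidelMatrix, Matrix.of_apply]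
      by_cases hij : i = j
      · subst hij
        simp [G.irrefl]
      · by_cases hadj : G.Adj i j <;> simp [hij, hadj] <;> ring
    rw [Finset.sum_congr rfl fun j _ => key j] at h
    rw [Finset.sum_sub_distrib, Finset.sum_sub_distrib, Finset.sum_ite_eq,
      if_pos (Finset.mem_univ i), ← Finset.mul_sum] at h
    simp only [hσ, htdef]
    linarith
    -- σ is odd
  have hσodd : ¬ (2 : ℤ) ∣ σ := by
    intro h2
    have hall : ∀ i, (2 : ℤ) ∣ y i := by
      intro i
      obtain ⟨k, hk⟩ := h2
      refine ⟨k - t i, ?_⟩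
      have := hrow i
      linarith
    have : (2 : ℤ) ∣ Finset.univ.gcd y :=
      Finset.dvd_gcd fun i _ => hall i
    rw [hgcd] at this
    norm_num at this
  -- degree identities
  have hd1 : ∀ i, (∑ j, if G.Adj i j then (1 : ℤ) else 0) = d i := by
    intro i
    rw [Finset.sum_boole, hddef]
    congr 1
    rw [SimpleGraph.degree, SimpleGraph.neighborFinset_eq_filter]
  have hd2 : ∀ j, (∑ i, if G.Adj i j then (1 : ℤ) else 0) = d j := by
    intro j
    rw [← hd1 j]
    exact Finset.sum_congr rfl fun i _ => if_congr (G.adj_comm i j) rfl rfl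
  -- t in terms of degrees
  have ht : ∀ i, t i = σ * d i - 2 * w i := by
    intro i
    have h1 : t i = ∑ j, if G.Adj i j then σ - 2 * t j else 0 := by
      rw [htdef]
      exact Finset.sum_congr rfl fun j _ => by
        by_cases hadj : G.Adj i j <;> simp [hadj] <;> linarith [hrow j]
    have h2 : ∀ j, (if G.Adj i j then σ - 2 * t j else 0)
        = σ * (if G.Adj i j then (1 : ℤ) else 0) - 2 * (if G.Adj i j then t j else 0) := by
      intro j
      by_cases hadj : G.Adj i j <;> simp [hadj]
    rw [h1, Finset.sum_congr rfl fun j _ => h2 j, Finset.sum_sub_distrib,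
      ← Finset.mul_sum, ← Finset.mul_sum, hd1 i]
    -- global sums
  set T : ℤ := ∑ i, t i with hTdef
  set W : ℤ := ∑ i, d i * t i with hWdef
  set V : ℤ := ∑ i, d i * w i with hVdef
  set D2 : ℤ := ∑ i, d i * d i with hD2def
  set C : ℤ := ∑ j, ∑ k, if G.Adj j k then d j * d k else 0 with hCdef
  set Z : ℤ := ∑ j, ∑ k, if G.Adj j k then d j * w k else 0 with hZdef
  set mI : ℤ := (G.edgeFinset.card : ℤ) with hmIdef
  have hdsum : ∑ j, d j = 2 * mI := by
    rw [hddef, hmIdef, ← Nat.cast_sum, ← Nat.cast_ofNat (n := 2), ← Nat.cast_mul,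
      G.sum_degrees_eq_twice_card_edges]
  have e1 : (n : ℤ) * σ = σ + 2 * T := by
    have h1 : ∑ _i : Fin n, σ = (n : ℤ) * σ := by
      rw [Finset.sum_const, Finset.card_univ, Fintype.card_fin, nsmul_eq_mul]
    rw [← h1, hTdef, Finset.mul_sum, ← Finset.sum_add_distrib]
    exact Finset.sum_congr rfl fun i _ => hrow i
  have hT : T = ∑ j, d j * y j := by
    rw [hTdef, htdef]
    rw [Finset.sum_comm]
    refine Finset.sum_congr rfl fun j _ => ?_
    have h1 : ∀ i : Fin n, (if G.Adj i j then y j else 0)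
        = y j * (if G.Adj i j then (1 : ℤ) else 0) := fun i => by
      by_cases hadj : G.Adj i j <;> simp [hadj]
    rw [Finset.sum_congr rfl fun i _ => h1 i, ← Finset.mul_sum, hd2 j, mul_comm]
  have e2 : T = 2 * mI * σ - 2 * W := by
    have h1 : ∀ j : Fin n, d j * y j = σ * d j - 2 * (d j * t j) := fun j => by
      have hy : y j = σ - 2 * t j := by linarith [hrow j]
      rw [hy]; ring
    rw [hT, Finset.sum_congr rfl fun j _ => h1 j, Finset.sum_sub_distrib,
      ← Finset.mul_sum, ← Finset.mul_sum, hdsum, hWdef]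
    ring
  have e3 : W = σ * D2 - 2 * V := by
    have h1 : ∀ j : Fin n, d j * t j = σ * (d j * d j) - 2 * (d j * w j) := fun j => by
      rw [ht j]; ring
    rw [hWdef, Finset.sum_congr rfl fun j _ => h1 j, Finset.sum_sub_distrib,
      ← Finset.mul_sum, ← Finset.mul_sum, hD2def, hVdef]
  have e4 : V = σ * C - 2 * Z := by
    have h1 : ∀ j : Fin n, d j * w j
        = ∑ k, (σ * (if G.Adj j k then d j * d k else 0)
            - 2 * (if G.Adj j k then d j * w k else 0)) := by
      intro j
      have hw : w j = ∑ k, if G.Adj j k then t k else 0 := rfl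
      rw [hw, Finset.mul_sum]
      refine Finset.sum_congr rfl fun k _ => ?_
      by_cases hadj : G.Adj j k
      · simp only [hadj, if_true]
        rw [ht k]; ring
      · simp [hadj]
    rw [hVdef, Finset.sum_congr rfl fun j _ => h1 j]
    simp only [Finset.sum_sub_distrib, ← Finset.mul_sum]
    rw [hCdef, hZdef]
  have e5 : Even C := by
    rw [hCdef]
    refine even_double_sum_sym _ (fun j k => ?_) (fun j => ?_) _
    · by_cases hadj : G.Adj j k
      · rw [if_pos hadj, if_pos (hadj.symm), mul_comm]
      · rw [if_neg hadj, if_neg fun h => hadj h.symm]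
    · simp [G.irrefl]
  obtain ⟨C', hC'⟩ := e5
  have key : ((n : ℤ) - 1) * σ = 4 * mI * σ - 4 * (σ * D2) + 16 * (σ * C' - Z) := by
    have e4' : V = 2 * (σ * C') - 2 * Z := by rw [e4, hC']; ring
    linear_combination e1 + 2 * e2 - 4 * e3 + 8 * e4'
    -- cancel σ mod 16
  have hcop : Int.gcd 16 σ = 1 := by
    have hodd : ¬ (2 : ℕ) ∣ σ.natAbs := by
      intro h
      exact hσodd (Int.natAbs_dvd_natAbs.mp h)
    have h2 : Nat.Coprime 2 σ.natAbs := (Nat.prime_two.coprime_iff_not_dvd).mpr hodd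
    have h16 : Nat.Coprime 16 σ.natAbs := by
      have := Nat.Coprime.pow_left 4 h2
      norm_num at this
      exact this
    exact h16
  have h16 : σ * ((n : ℤ) - 1) ≡ σ * (4 * mI - 4 * D2) [ZMOD 16] := by
    refine Int.modEq_iff_dvd.mpr ⟨Z - σ * C', ?_⟩
    linear_combination -key
  have hcan : ((n : ℤ) - 1) ≡ 4 * mI - 4 * D2 [ZMOD 16] := by
    have h := Int.ModEq.cancel_left_div_gcd (show (0:ℤ) < 16 by norm_num) h16
    rwa [hcop, Nat.cast_one, Int.ediv_one] at h
  -- replace D2 by the number of odd-degree vertices mod 4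
  set noddI : ℤ := ((Finset.univ.filter fun v => Odd (G.degree v)).card : ℤ) with hnoddI
  have hboole : noddI = ∑ v, if Odd (G.degree v) then (1 : ℤ) else 0 :=
    (Finset.sum_boole _ _).symm
  have hdvd4 : (4 : ℤ) ∣ D2 - noddI := by
    rw [hboole, hD2def, ← Finset.sum_sub_distrib]
    refine Finset.dvd_sum fun v _ => ?_
    have hdv : d v = ((G.degree v : ℕ) : ℤ) := rfl
    rcases Nat.even_or_odd (G.degree v) with he | ho
    · rw [if_neg (Nat.not_odd_iff_even.mpr he), hdv]
      obtain ⟨k, hk⟩ := he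
      rw [hk]
      exact ⟨(k : ℤ) * k, by push_cast; ring⟩
    · rw [if_pos ho, hdv]
      obtain ⟨k, hk⟩ := ho
      rw [hk]
      exact ⟨(k : ℤ) * k + k, by push_cast; ring⟩
  have hcan2 : ((n : ℤ) - 1) ≡ 4 * mI - 4 * noddI [ZMOD 16] := by
    refine hcan.trans (Int.modEq_iff_dvd.mpr ?_)
    obtain ⟨u, hu⟩ := hdvd4
    exact ⟨u, by linear_combination (4 : ℤ) * hu⟩
  obtain ⟨j, hj⟩ := Int.modEq_iff_dvd.mp hcan2
  -- final numerics
  have hn1 : ((n - 1 : ℕ) : ℤ) = 4 * (mI - noddI - 4 * j) := by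
    have hcast : ((n - 1 : ℕ) : ℤ) = (n : ℤ) - 1 := by
      have : (1 : ℕ) ≤ n := hn
      push_cast [this]
      ring
    rw [hcast]
    linarith [hj]
  have h4dvd : 4 ∣ (n - 1) := by
    have : ((4 : ℕ) : ℤ) ∣ ((n - 1 : ℕ) : ℤ) := ⟨mI - noddI - 4 * j, hn1⟩
    exact_mod_cast this
  obtain ⟨q, hq⟩ := h4dvd
  have hqZ : (q : ℤ) = (G.edgeFinset.card : ℤ) - noddI - 4 * j := by
    rw [hq] at hn1
    push_cast at hn1
    rw [hmIdef] at hn1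
    linarith
  obtain ⟨k, hk⟩ := G.even_card_odd_degree_vertices
  have hq4 : (n - 1) / 4 = q := by omega
  rw [hq4]
  have hkk : (Finset.univ.filter fun v => Odd (G.degree v)).card = k + k := by
    rw [← hk]
  rw [hnoddI, hkk] at hqZ
  omega
end

section
/- Let G be a graph of order n with m edges whose Seidel matrix is singular. Then m ≡ (n-1)/4 (mod 2). -/
/-!
Adding an edge `ij` to a graph subtracts `2` from the entries `(i, j)` and `(j, i)` of its
Seidel matrix `S`. By multilinearity of the determinant in the rows `i` and `j`, this changes
`det S` by `-2 (C_ij + C_ji) + 4 D`, where `C` is the adjugate of `S` and `D` the determinant of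
`S` with rows `i`, `j` replaced by the unit vectors `e_j`, `e_i`. Since `S` is symmetric,
`C_ij = C_ji`, and since `S ≡ J - I (mod 2)`, one computes `C_ij ≡ 1` and `D ≡ n + 1 (mod 2)`.
So every edge changes `det S` by `4n (mod 8)`, and starting from
`det (J - I) = (-1)^(n+1) (n - 1)` we get `det S ≡ (-1)^(n+1) (n - 1) + 4nm (mod 8)`.
If `det S = 0`, this forces `n` odd and then `n - 1 + 4m ≡ 0 (mod 8)`.
-/

open Matrix

open Finset

namespace Matrix

def offDiagOnes (R ι : Type*) [Zero R] [One R] [DecidableEq ι] : Matrix ι ι R :=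
  of fun a b => if a = b then 0 else 1

variable {ι R : Type*} [Fintype ι] [DecidableEq ι]

theorem det_offDiagOnes [CommRing R] :
    (offDiagOnes R ι).det = (-1) ^ (Fintype.card ι + 1) * (Fintype.card ι - 1) := by
  have h : offDiagOnes R ι =
      -(1 + replicateCol Unit (fun _ : ι => (-1 : R))
        * replicateRow Unit (fun _ : ι => (1 : R))) := by
    ext a b
    by_cases h : a = b <;> simp [offDiagOnes, mul_apply, h]
  rw [h, det_neg, det_one_add_replicateCol_mul_replicateRow]
  simp [dotProduct]
  ring

theorem det_add_smul_single_add_single [CommRing R] (M : Matrix ι ι R) {i j : ι} (hij : i ≠ j)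
    (t : R) :
    (M + t • (single i j 1 + single j i 1)).det = M.det + t * (M.adjugate i j + M.adjugate j i)
      + t ^ 2 * ((M.updateRow i (Pi.single j 1)).updateRow j (Pi.single i 1)).det := by
  have hM : M + t • (single i j 1 + single j i 1)
      = (M.updateRow i (M i + t • Pi.single j 1)).updateRow j (M j + t • Pi.single i 1) := by
    ext a b
    simp only [add_apply, smul_apply, single_apply, updateRow_apply, Pi.add_apply,
      Pi.smul_apply, Pi.single_apply]
    by_cases ha : a = j <;> by_cases ha' : a = i <;> simp_all [eq_comm]
  have hMj : M.updateRow i (M i + t • Pi.single j 1) j = M j := updateRow_ne hij.symm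
  have hMi : M.updateRow j (Pi.single i 1) i = M i := updateRow_ne hij
  have h₁ :
      ((M.updateRow i (M i + t • Pi.single j 1)).updateRow j (M j + t • Pi.single i 1)).det
      = (M.updateRow i (M i + t • Pi.single j 1)).det
        + t * ((M.updateRow i (M i + t • Pi.single j 1)).updateRow j (Pi.single i 1)).det := by
    rw [det_updateRow_add, det_updateRow_smul, ← hMj, updateRow_eq_self]
  have h₂ : (M.updateRow i (M i + t • Pi.single j 1)).det = M.det + t * M.adjugate j i := by
    rw [det_updateRow_add, det_updateRow_smul, updateRow_eq_self, adjugate_apply]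
  have h₃ : ((M.updateRow i (M i + t • Pi.single j 1)).updateRow j (Pi.single i 1)).det
      = M.adjugate i j + t * ((M.updateRow i (Pi.single j 1)).updateRow j (Pi.single i 1)).det := by
    rw [updateRow_comm _ hij, det_updateRow_add, det_updateRow_smul, ← hMi, updateRow_eq_self,
      adjugate_apply, updateRow_comm _ hij]
  rw [hM, h₁, h₂, h₃]
  ring

section ZModTwo

/-- In characteristic two, `J - I = I + J`, so this matrix is `I + u 1ᵀ` with `u` the indicator
of `Sᶜ`, and its determinant is `1 + #Sᶜ`. -/
theorem det_of_ite_mem_one_offDiagOnes (S : Finset ι) :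
    (of fun a b => if a ∈ S then (1 : Matrix ι ι (ZMod 2)) a b
      else offDiagOnes (ZMod 2) ι a b).det = Fintype.card ι + #S + 1 := by
  have h : (of fun a b => if a ∈ S then (1 : Matrix ι ι (ZMod 2)) a b
        else offDiagOnes (ZMod 2) ι a b)
      = 1 + replicateCol Unit (fun a => if a ∈ S then (0 : ZMod 2) else 1)
          * replicateRow Unit (fun _ : ι => (1 : ZMod 2)) := by
    ext a b
    by_cases ha : a ∈ S <;> by_cases hab : a = b <;>
      simp_all [offDiagOnes, one_apply, mul_apply, CharTwo.add_self_eq_zero]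
  have hcard : (#S : ZMod 2) + #Sᶜ = Fintype.card ι := by
    rw [← Nat.cast_add, card_add_card_compl]
  have hcompl : #{a | a ∉ S} = #Sᶜ := by
    congr 1
    ext
    simp
  rw [h, det_one_add_replicateCol_mul_replicateRow]
  simp [dotProduct, sum_ite, ← hcard, hcompl]
  linear_combination -(CharTwo.add_self_eq_zero (#S : ZMod 2))

theorem adjugate_offDiagOnes_zmod_two {i j : ι} (hij : i ≠ j) :
    (offDiagOnes (ZMod 2) ι).adjugate i j = 1 := by
  set N := offDiagOnes (ZMod 2) ι
  have hi : Pi.single i 1 = N i + fun _ => 1 := by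
    ext b
    rcases eq_or_ne b i with rfl | hb
    · simp [N, offDiagOnes]
    · simp [N, offDiagOnes, hb, hb.symm, CharTwo.add_self_eq_zero]
  have hj : (fun _ => 1) = N j + Pi.single j 1 := by
    ext b
    rcases eq_or_ne b j with rfl | hb
    · simp [N, offDiagOnes]
    · simp [N, offDiagOnes, hb, hb.symm]
  have hN : N = of fun a b => if a ∈ (∅ : Finset ι) then (1 : Matrix ι ι (ZMod 2)) a b
      else N a b := by
    ext a b
    simp
  have hNj : N.updateRow j (Pi.single j 1)
      = of fun a b => if a ∈ ({j} : Finset ι) then (1 : Matrix ι ι (ZMod 2)) a b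
          else N a b := by
    ext a b
    rcases eq_or_ne a j with rfl | ha
    · simp [one_apply, Pi.single_apply, eq_comm]
    · simp [ha]
  have hrep : (N.updateRow j (N i)).det = 0 :=
    det_zero_of_row_eq hij.symm (by rw [updateRow_self, updateRow_ne hij])
  rw [adjugate_apply, hi, det_updateRow_add, hrep, hj, det_updateRow_add, updateRow_eq_self, hNj]
  nth_rw 1 [hN]
  rw [det_of_ite_mem_one_offDiagOnes, det_of_ite_mem_one_offDiagOnes]
  simp
  linear_combination CharTwo.add_self_eq_zero ((Fintype.card ι : ZMod 2) + 1)

theorem det_updateRow_single_updateRow_single_offDiagOnes_zmod_two {i j : ι} (hij : i ≠ j) :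
    (((offDiagOnes (ZMod 2) ι).updateRow i (Pi.single j 1)).updateRow j (Pi.single i 1)).det
      = Fintype.card ι + 1 := by
  have h : ((offDiagOnes (ZMod 2) ι).updateRow i (Pi.single j 1)).updateRow j (Pi.single i 1)
      = (of fun a b => if a ∈ ({i, j} : Finset ι) then (1 : Matrix ι ι (ZMod 2)) a b
          else offDiagOnes (ZMod 2) ι a b).submatrix (Equiv.swap i j) id := by
    ext a b
    rcases eq_or_ne a i with rfl | hai
    · simp [updateRow_ne hij, one_apply, Pi.single_apply, eq_comm]
    rcases eq_or_ne a j with rfl | haj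
    · simp [one_apply, Pi.single_apply, eq_comm]
    simp [Equiv.swap_apply_of_ne_of_ne hai haj, hai, haj]
  rw [h, det_permute, det_of_ite_mem_one_offDiagOnes, card_pair hij]
  simp [Equiv.Perm.sign_swap hij]
  rfl

end ZModTwo

theorem det_add_neg_two_smul_single_add_single_modEq (M : Matrix ι ι ℤ) (hM : M.IsSymm)
    (hM₂ : M.map (Int.cast : ℤ → ZMod 2) = offDiagOnes (ZMod 2) ι) {i j : ι}
    (hij : i ≠ j) :
    (M + (-2) • (single i j 1 + single j i 1)).det ≡ M.det + 4 * Fintype.card ι [ZMOD 8] := by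
  have hC : M.adjugate i j ≡ 1 [ZMOD 2] := by
    refine (ZMod.intCast_eq_intCast_iff _ _ 2).mp ?_
    rw [Int.cast_one, ← adjugate_offDiagOnes_zmod_two hij, ← hM₂]
    exact congr_fun (congr_fun (RingHom.map_adjugate (Int.castRingHom (ZMod 2)) M) i) j
  have hD : ((M.updateRow i (Pi.single j 1)).updateRow j (Pi.single i 1)).det
      ≡ Fintype.card ι + 1 [ZMOD 2] := by
    refine (ZMod.intCast_eq_intCast_iff _ _ 2).mp ?_
    push_cast
    rw [← det_updateRow_single_updateRow_single_offDiagOnes_zmod_two hij, ← hM₂]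
    simp only [map_updateRow]
    congr 3 <;> ext b <;> simp [Pi.single_apply, apply_ite]
  obtain ⟨x, hx⟩ := Int.modEq_iff_dvd.mp hC.symm
  obtain ⟨y, hy⟩ := Int.modEq_iff_dvd.mp hD.symm
  rw [det_add_smul_single_add_single M hij, hM.adjugate.apply i j]
  exact Int.modEq_iff_dvd.mpr ⟨x - y, by linear_combination 4 * hx - 4 * hy⟩

end Matrix

theorem SimpleGraph.card_edgeFinset_deleteEdges_singleton {V : Type*} [Fintype V]
    [DecidableEq V] (G : SimpleGraph V) [DecidableRel G.Adj] {e : Sym2 V}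
    [Fintype (G.deleteEdges {e}).edgeSet] (he : e ∈ G.edgeFinset) :
    #(G.deleteEdges {e}).edgeFinset = #G.edgeFinset - 1 := by
  have : (G.deleteEdges {e}).edgeFinset = G.edgeFinset.erase e := by
    ext
    simp [and_comm]
  rw [this, card_erase_of_mem he]

section Seidel

variable {n : ℕ} (G : SimpleGraph (Fin n)) [DecidableRel G.Adj]

theorem seidelMatrix_isSymm : (seidelMatrix G).IsSymm := by
  ext a b
  simp [seidelMatrix, eq_comm, G.adj_comm]

theorem seidelMatrix_map_intCast_zmod_two :
    (seidelMatrix G).map (Int.cast : ℤ → ZMod 2) = offDiagOnes (ZMod 2) (Fin n) := by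
  ext a b
  simp only [seidelMatrix, offDiagOnes, map_apply, of_apply]
  split_ifs <;> simp

theorem seidelMatrix_bot [DecidableRel (⊥ : SimpleGraph (Fin n)).Adj] :
    seidelMatrix (⊥ : SimpleGraph (Fin n)) = offDiagOnes ℤ (Fin n) := by
  ext a b
  simp [seidelMatrix, offDiagOnes]

theorem seidelMatrix_eq_deleteEdges_add {i j : Fin n} (h : G.Adj i j)
    [DecidableRel (G.deleteEdges {s(i, j)}).Adj] :
    seidelMatrix G
      = seidelMatrix (G.deleteEdges {s(i, j)}) + (-2) • (single i j 1 + single j i 1) := by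
  ext a b
  simp only [seidelMatrix, Matrix.add_apply, Matrix.smul_apply, single_apply, of_apply,
    SimpleGraph.deleteEdges_adj, Set.mem_singleton_iff, Sym2.eq_iff]
  split_ifs <;> grind [h.ne, h.symm]

theorem det_seidelMatrix_modEq :
    (seidelMatrix G).det ≡ (-1) ^ (n + 1) * (n - 1) + 4 * n * #G.edgeFinset [ZMOD 8] := by
  induction hm : #G.edgeFinset generalizing G with
  | zero =>
    rw [card_eq_zero, SimpleGraph.edgeFinset_eq_empty] at hm
    subst hm
    rw [seidelMatrix_bot, det_offDiagOnes, Fintype.card_fin]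
    simp
  | succ m ih =>
    classical
    obtain ⟨e, he⟩ := card_pos.mp (by omega : 0 < #G.edgeFinset)
    induction e using Sym2.ind with | h i j => ?_
    have hadj : G.Adj i j := G.mem_edgeFinset.mp he
    have ih' := ih (G.deleteEdges {s(i, j)})
      (by rw [G.card_edgeFinset_deleteEdges_singleton he, hm, Nat.add_sub_cancel])
    rw [seidelMatrix_eq_deleteEdges_add G hadj]
    refine (det_add_neg_two_smul_single_add_single_modEq _ (seidelMatrix_isSymm _)
      (seidelMatrix_map_intCast_zmod_two _) hadj.ne).trans ?_
    rw [Fintype.card_fin]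
    convert ih'.add_right (4 * n) using 1
    push_cast
    ring

end Seidel

theorem mod_two_eq_sub_one_div_four_mod_two_of_modEq {n m : ℕ}
    (h : (-1 : ℤ) ^ (n + 1) * (n - 1) + 4 * n * m ≡ 0 [ZMOD 8]) :
    m % 2 = (n - 1) / 4 % 2 := by
  obtain ⟨c, hc⟩ := Int.modEq_zero_iff_dvd.mp h
  rcases Nat.even_or_odd' n with ⟨k, rfl | rfl⟩
  · rw [pow_succ, (even_two_mul k).neg_one_pow] at hc
    push_cast at hc
    have : (4 : ℤ) * (2 * k) * m = 8 * (k * m) := by ring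
    rw [this] at hc
    generalize (k : ℤ) * m = u at hc
    omega
  · rw [pow_succ, pow_succ, (even_two_mul k).neg_one_pow] at hc
    push_cast at hc
    have : (4 : ℤ) * (2 * k + 1) * m = 8 * (k * m) + 4 * m := by ring
    rw [this] at hc
    generalize (k : ℤ) * m = u at hc
    omega

theorem seidel_singular_size_mod_two {n : ℕ} (G : SimpleGraph (Fin n))
    [DecidableRel G.Adj]
    (hsing : (seidelMatrix G).det = 0) :
    G.edgeFinset.card % 2 = ((n - 1) / 4) % 2 := by
  have h := det_seidelMatrix_modEq G
  rw [hsing] at h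
  exact mod_two_eq_sub_one_div_four_mod_two_of_modEq h.symm
end

section
/- If G is a tree of order n whose Seidel matrix is singular, then n ≡ 1 (mod 8). -/
/-!
Reduce a primitive integer kernel vector of `S = J - I - 2A` modulo 8: since some coordinate is
odd, `z = s • 1 - 2 • A z` with `s = ∑ z` a unit of `ZMod 8`. Pairing this equation with `1`,
`d = A 1` and `A d` (using `Aᵀ = A`) and eliminating gives `s = s (n - 2 ∑ d + 4 d ⬝ d)` modulo 8.
As `∑ d = 2m` and `4 d² ≡ 4 d`, this reads `s = s (n - 4m)`, hence `n ≡ 4m + 1 (mod 8)` for every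
graph with singular Seidel matrix; for a tree `m = n - 1`, so `3n ≡ 3`.
-/

open Matrix

theorem Matrix.exists_mulVec_eq_zero_and_gcd_eq_one_of_det_eq_zero {ι A : Type*} [Fintype ι]
    [DecidableEq ι] [CommRing A] [IsDomain A] [NormalizedGCDMonoid A] {M : Matrix ι ι A}
    (hM : M.det = 0) :
    ∃ w, M *ᵥ w = 0 ∧ Finset.univ.gcd w = 1 := by
  obtain ⟨v, hv0, hv⟩ := exists_mulVec_eq_zero_iff.mpr hM
  obtain ⟨i, hi⟩ := Function.ne_iff.mp hv0
  obtain ⟨w, hvw, hw⟩ := Finset.univ.extract_gcd v ⟨i, Finset.mem_univ i⟩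
  have hg : Finset.univ.gcd v ≠ 0 := fun h =>
    hi (Finset.gcd_eq_zero_iff.mp h i (Finset.mem_univ i))
  have hv_eq : v = Finset.univ.gcd v • w := funext fun j => hvw j (Finset.mem_univ j)
  rw [hv_eq, mulVec_smul] at hv
  exact ⟨w, (smul_eq_zero.mp hv).resolve_left hg, hw⟩

theorem Finset.exists_odd_of_gcd_eq_one {ι : Type*} {s : Finset ι} {w : ι → ℤ}
    (hw : s.gcd w = 1) : ∃ i ∈ s, Odd (w i) := by
  by_contra! h
  have : (2 : ℤ) ∣ s.gcd w :=
    Finset.dvd_gcd fun i hi => (Int.not_odd_iff_even.mp (h i hi)).two_dvd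
  rw [hw] at this
  norm_num at this

theorem ZMod.isUnit_intCast_add_two_mul {k : ℤ} (hk : Odd k) (x : ZMod 8) :
    IsUnit ((k : ZMod 8) + 2 * x) := by
  obtain ⟨j, rfl⟩ := hk
  have hodd : ∀ c : ZMod 8, IsUnit (2 * c + 1) := by decide
  convert hodd (j + x) using 1
  push_cast; ring

section SymmetricKernel

variable {ι R : Type*} [Fintype ι] [CommRing R] {A : Matrix ι ι R} {z : ι → R}

theorem dotProduct_eq_of_eq_smul_one_sub (hA : A.IsSymm) {s : R}
    (hz : z = s • 1 - 2 • A *ᵥ z) (x : ι → R) :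
    x ⬝ᵥ z = s * ∑ i, x i - 2 * ((A *ᵥ x) ⬝ᵥ z) := by
  conv_lhs => rw [hz]
  rw [dotProduct_sub, dotProduct_smul, dotProduct_smul, dotProduct_one, dotProduct_mulVec,
    ← mulVec_transpose, hA.eq, smul_eq_mul, nsmul_eq_mul]
  push_cast; ring

theorem sum_eq_of_eq_smul_one_sub (hA : A.IsSymm) (hz : z = (∑ i, z i) • 1 - 2 • A *ᵥ z) :
    ∑ i, z i = (∑ i, z i) * (Fintype.card ι - 2 * ∑ i, (A *ᵥ 1) i
      + 4 * (A *ᵥ 1) ⬝ᵥ (A *ᵥ 1)) - 8 * ((A *ᵥ A *ᵥ A *ᵥ 1) ⬝ᵥ z) := by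
  have h₀ := dotProduct_eq_of_eq_smul_one_sub hA hz 1
  have h₁ := dotProduct_eq_of_eq_smul_one_sub hA hz (A *ᵥ 1)
  have h₂ := dotProduct_eq_of_eq_smul_one_sub hA hz (A *ᵥ A *ᵥ 1)
  have hsq : ∑ i, (A *ᵥ A *ᵥ 1) i = (A *ᵥ 1) ⬝ᵥ (A *ᵥ 1) := by
    rw [← one_dotProduct, dotProduct_mulVec, ← mulVec_transpose, hA.eq]
  rw [one_dotProduct] at h₀
  simp only [Pi.one_apply, Finset.sum_const, Finset.card_univ, nsmul_eq_mul, mul_one] at h₀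
  rw [hsq] at h₂
  linear_combination h₀ - 2 * h₁ + 4 * h₂

end SymmetricKernel

theorem SimpleGraph.sum_eq_sum_mul_of_eq_smul_one_sub {V : Type*} [Fintype V] [DecidableEq V]
    (G : SimpleGraph V) [DecidableRel G.Adj] {z : V → ZMod 8}
    (hz : z = (∑ i, z i) • 1 - 2 • G.adjMatrix (ZMod 8) *ᵥ z) :
    ∑ i, z i = (∑ i, z i) * (Fintype.card V - 4 * G.edgeFinset.card) := by
  have hdeg : ∀ v, (G.adjMatrix (ZMod 8) *ᵥ 1) v = G.degree v := fun v => by simp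
  have hsum : ∑ v, (G.adjMatrix (ZMod 8) *ᵥ 1) v = 2 * G.edgeFinset.card := by
    simp only [hdeg]
    rw [← Nat.cast_sum, G.sum_degrees_eq_twice_card_edges]
    push_cast; ring
  have h8 : (8 : ZMod 8) = 0 := by decide
  have hsq : 4 * (G.adjMatrix (ZMod 8) *ᵥ 1) ⬝ᵥ (G.adjMatrix (ZMod 8) *ᵥ 1) = 0 := by
    have h4 : ∀ x : ZMod 8, 4 * (x * x) = 4 * x := by decide
    rw [dotProduct, Finset.mul_sum]
    simp only [h4, ← Finset.mul_sum, hsum]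
    linear_combination (G.edgeFinset.card : ZMod 8) * h8
  have := sum_eq_of_eq_smul_one_sub G.isSymm_adjMatrix hz
  rw [hsum, h8] at this
  linear_combination this + (∑ i, z i) * hsq

theorem seidelMatrix_map_intCast_mulVec {n : ℕ} (G : SimpleGraph (Fin n)) [DecidableRel G.Adj]
    {R : Type*} [CommRing R] (z : Fin n → R) :
    (seidelMatrix G).map (Int.cast : ℤ → R) *ᵥ z =
      (∑ i, z i) • 1 - z - 2 • G.adjMatrix R *ᵥ z := by
  ext i
  have hentry : ∀ j, ((seidelMatrix G i j : ℤ) : R) =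
      1 - (if i = j then 1 else 0) - 2 * G.adjMatrix R i j := by
    intro j
    by_cases hij : i = j
    · subst hij; simp [seidelMatrix]
    · by_cases hadj : G.Adj i j
      · simp [seidelMatrix, hij, hadj]; ring
      · simp [seidelMatrix, hij, hadj]
  simp only [mulVec, dotProduct, map_apply, hentry, sub_mul, Finset.sum_sub_distrib, one_mul,
    ite_mul, zero_mul, Finset.sum_ite_eq, Finset.mem_univ, if_true, mul_assoc, ← Finset.mul_sum]
  simp [mulVec, dotProduct]

theorem modEq_of_det_seidelMatrix_eq_zero {n : ℕ} (G : SimpleGraph (Fin n)) [DecidableRel G.Adj]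
    (hsing : (seidelMatrix G).det = 0) : n ≡ 4 * G.edgeFinset.card + 1 [MOD 8] := by
  obtain ⟨y, hy, hgcd⟩ := exists_mulVec_eq_zero_and_gcd_eq_one_of_det_eq_zero hsing
  obtain ⟨i, -, hi⟩ := Finset.exists_odd_of_gcd_eq_one hgcd
  set z : Fin n → ZMod 8 := Int.cast ∘ y
  have hker : (seidelMatrix G).map (Int.cast : ℤ → ZMod 8) *ᵥ z = 0 := funext fun j => by
    simpa [hy] using (RingHom.map_mulVec (Int.castRingHom (ZMod 8)) (seidelMatrix G) y j).symm
  rw [seidelMatrix_map_intCast_mulVec, sub_right_comm, sub_eq_zero] at hker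
  set s := ∑ j, z j
  have hs : IsUnit s := by
    have hzi : (y i : ZMod 8) = s - 2 * (G.adjMatrix (ZMod 8) *ᵥ z) i := by
      simpa [z] using congrFun hker.symm i
    rw [show s = y i + 2 * (G.adjMatrix (ZMod 8) *ᵥ z) i by linear_combination -hzi]
    exact ZMod.isUnit_intCast_add_two_mul hi _
  have key := G.sum_eq_sum_mul_of_eq_smul_one_sub hker.symm
  rw [Fintype.card_fin] at key
  have hcard : (n : ZMod 8) - 4 * G.edgeFinset.card = 1 :=
    hs.mul_left_cancel (key.symm.trans (mul_one s).symm)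
  rw [← ZMod.natCast_eq_natCast_iff]
  push_cast
  linear_combination hcard

theorem seidel_singular_tree_order {n : ℕ} (G : SimpleGraph (Fin n))
    [DecidableRel G.Adj]
    (htree : G.IsTree)
    (hsing : (seidelMatrix G).det = 0) :
    n % 8 = 1 := by
  have hmod := modEq_of_det_seidelMatrix_eq_zero G hsing
  have hedges := htree.card_edgeFinset
  rw [Fintype.card_fin] at hedges
  unfold Nat.ModEq at hmod
  omega
end

section
/- Let G be a graph of odd order. Then switching G with respect to the set of its odd-degree vertices yields a graph in which every vertex has even degree. -/
/-! Switching at `A` replaces the neighbourhood of `v` by its symmetric difference with the side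
of the partition `A, Aᶜ` not containing `v`, so the new degree of `v` has the parity of
`deg v + #Aᶜ` if `v ∈ A` and of `deg v + #A` otherwise. For `A` the set of odd vertices, `#A` is
even by the handshake lemma, hence `#Aᶜ = n - #A` is odd, and both sums are even. -/

open Matrix Finset

/-- Seidel switching of a graph with respect to a set of vertices `A`:
adjacencies between `A` and its complement are complemented, others unchanged. -/
def switchGraph {n : ℕ} (G : SimpleGraph (Fin n)) (A : Finset (Fin n)) :
    SimpleGraph (Fin n) where
  Adj v w := v ≠ w ∧ (G.Adj v w ↔ ((v ∈ A) ↔ (w ∈ A)))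
  symm := ⟨by
    intro v w ⟨h1, h2⟩
    exact ⟨h1.symm, by rw [G.adj_comm]; tauto⟩⟩
  loopless := ⟨fun v h => h.1 rfl⟩

instance {n : ℕ} (G : SimpleGraph (Fin n)) [DecidableRel G.Adj] (A : Finset (Fin n)) :
    DecidableRel (switchGraph G A).Adj :=
  fun v w => inferInstanceAs (Decidable (v ≠ w ∧ (G.Adj v w ↔ ((v ∈ A) ↔ (w ∈ A)))))

namespace Finset

variable {α : Type*} [DecidableEq α]

theorem card_symmDiff_add_two_mul_card_inter (s t : Finset α) :
    #(symmDiff s t) + 2 * #(s ∩ t) = #s + #t := by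
  have hs := card_sdiff_add_card_inter s t
  have ht := card_sdiff_add_card_inter t s
  rw [inter_comm] at ht
  rw [symmDiff_def, sup_eq_union, card_union_of_disjoint disjoint_sdiff_sdiff]
  omega

theorem even_card_symmDiff_iff (s t : Finset α) :
    Even #(symmDiff s t) ↔ Even (#s + #t) := by
  rw [← card_symmDiff_add_two_mul_card_inter, Nat.even_add, iff_true_right (even_two_mul _)]

end Finset

section switchGraph

variable {n : ℕ} (G : SimpleGraph (Fin n)) [DecidableRel G.Adj] (A : Finset (Fin n)) (v : Fin n)

theorem neighborFinset_switchGraph :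
    (switchGraph G A).neighborFinset v =
      symmDiff (G.neighborFinset v) (if v ∈ A then Aᶜ else A) := by
  ext w
  rw [SimpleGraph.mem_neighborFinset, mem_symmDiff, SimpleGraph.mem_neighborFinset]
  show v ≠ w ∧ (G.Adj v w ↔ (v ∈ A ↔ w ∈ A)) ↔ _
  by_cases hvw : v = w
  · subst hvw
    split_ifs <;> simp_all
  · by_cases hv : v ∈ A <;> simp only [hv, if_true, if_false, mem_compl] <;> tauto

theorem even_degree_switchGraph_iff :
    Even ((switchGraph G A).degree v) ↔ Even (G.degree v + #(if v ∈ A then Aᶜ else A)) := by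
  rw [← G.card_neighborFinset_eq_degree, ← SimpleGraph.card_neighborFinset_eq_degree,
    neighborFinset_switchGraph, Finset.even_card_symmDiff_iff]

end switchGraph

theorem switch_odd_vertices_even {n : ℕ} (hn : Odd n)
    (G : SimpleGraph (Fin n)) [DecidableRel G.Adj] :
    ∀ v, Even ((switchGraph G (Finset.univ.filter fun v => Odd (G.degree v))).degree v) := by
  intro v
  set A : Finset (Fin n) := univ.filter fun v => Odd (G.degree v)
  have hA : Even #A := G.even_card_odd_degree_vertices
  rw [even_degree_switchGraph_iff]
  by_cases hv : v ∈ A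
  · have hdeg : Odd (G.degree v) := by simpa [A] using hv
    have hcompl : Odd #Aᶜ := by
      rw [card_compl, Fintype.card_fin]
      exact Nat.Odd.sub_even ((card_le_univ A).trans_eq (Fintype.card_fin n)) hn hA
    rw [if_pos hv]
    exact hdeg.add_odd hcompl
  · have hdeg : Even (G.degree v) := by simpa [A] using hv
    rw [if_neg hv]
    exact hdeg.add hA
end

section
/- For every natural number k ≥ 1, the graph G_k consisting of the disjoint union of k copies of the path P_4 and one isolated vertex (order 4k+1, size 3k) becomes a 2k-regular graph after switching with respect to its 2k leaves; consequently its Seidel matrix is singular and has a ±1 nullspace vector. -/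
open Matrix Finset

/-- The disjoint union of `k` copies of `P₄` (on vertices `4i,4i+1,4i+2,4i+3` for `i < k`)
together with one isolated vertex (the vertex `4k`), on `4k+1` vertices. -/
def pathsPlusIsolated (k : ℕ) : SimpleGraph (Fin (4 * k + 1)) where
  Adj u v := u.val / 4 = v.val / 4 ∧ (u.val + 1 = v.val ∨ v.val + 1 = u.val)
  symm := ⟨by intro u v ⟨h1, h2⟩; exact ⟨h1.symm, h2.symm⟩⟩
  loopless := ⟨by intro u ⟨h1, h2⟩; omega⟩

instance (k : ℕ) : DecidableRel (pathsPlusIsolated k).Adj :=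
  fun u v => inferInstanceAs
    (Decidable (u.val / 4 = v.val / 4 ∧ (u.val + 1 = v.val ∨ v.val + 1 = u.val)))

/-- The set of leaves (degree-one vertices) of `pathsPlusIsolated k`:
the endpoints of the `k` paths. -/
def pathLeaves (k : ℕ) : Finset (Fin (4 * k + 1)) :=
  Finset.univ.filter fun v => v.val < 4 * k ∧ (v.val % 4 = 0 ∨ v.val % 4 = 3)

/-!
Switching with respect to the `2k` leaves `A` makes the graph `2k`-regular: a leaf loses its only
neighbour and is joined to the other `2k` non-leaves, an interior path vertex keeps its interior
neighbour, loses its leaf neighbour and is joined to the other `2k - 1` leaves, and the isolated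
vertex is joined to all leaves. Each row of the Seidel matrix of a `d`-regular graph on `n` vertices
sums to `n - 1 - 2d`, which vanishes here, so the all-ones vector is a null vector of the switched
Seidel matrix. Switching conjugates the Seidel matrix by the diagonal `±1` matrix `D` of the cut,
hence `D 𝟙` is a `±1` null vector of the Seidel matrix of the original graph.
-/

section Switching

variable {n : ℕ} (G : SimpleGraph (Fin n)) (A : Finset (Fin n))

lemma switchGraph_adj {v w : Fin n} :
    (switchGraph G A).Adj v w ↔ v ≠ w ∧ (G.Adj v w ↔ (v ∈ A ↔ w ∈ A)) := Iff.rfl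

variable [DecidableRel G.Adj]

def switchingSign (v : Fin n) : ℤ := if v ∈ A then -1 else 1

lemma switchingSign_eq_one_or_eq_neg_one (v : Fin n) :
    switchingSign A v = 1 ∨ switchingSign A v = -1 := by
  unfold switchingSign; split_ifs <;> simp

lemma switchingSign_ne_zero (A : Finset (Fin (n + 1))) : switchingSign A ≠ 0 := fun h => by
  rcases switchingSign_eq_one_or_eq_neg_one A 0 with h₀ | h₀ <;> simp [h] at h₀

lemma switchingSign_mul_self (v : Fin n) : switchingSign A v * switchingSign A v = 1 := by
  unfold switchingSign; split_ifs <;> simp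

lemma seidelMatrix_switchGraph_apply (i j : Fin n) :
    seidelMatrix (switchGraph G A) i j =
      switchingSign A i * seidelMatrix G i j * switchingSign A j := by
  simp only [seidelMatrix, switchGraph_adj, switchingSign, Matrix.of_apply]
  by_cases hi : i ∈ A <;> by_cases hj : j ∈ A <;> by_cases hij : i = j <;>
    by_cases hadj : G.Adj i j <;> simp [hi, hj, hij, hadj]

lemma sum_seidelMatrix_apply (i : Fin n) :
    ∑ j, seidelMatrix G i j = n - 1 - 2 * G.degree i := by
  have hentry : ∀ j, seidelMatrix G i j =
      1 - (if i = j then 1 else 0) - 2 * (if G.Adj i j then 1 else 0) := by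
    intro j
    simp only [seidelMatrix, Matrix.of_apply]
    split_ifs <;> simp_all
  simp only [hentry, Finset.sum_sub_distrib, ← Finset.mul_sum, Finset.sum_ite_eq,
    Finset.sum_boole, ← SimpleGraph.neighborFinset_eq_filter,
    SimpleGraph.card_neighborFinset_eq_degree]
  simp

lemma seidelMatrix_mulVec_switchingSign (i : Fin n) :
    (seidelMatrix G *ᵥ switchingSign A) i =
      switchingSign A i * ∑ j, seidelMatrix (switchGraph G A) i j := by
  simp only [Matrix.mulVec, dotProduct, seidelMatrix_switchGraph_apply, Finset.mul_sum]
  refine Finset.sum_congr rfl fun j _ => ?_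
  linear_combination (-(seidelMatrix G i j * switchingSign A j)) * switchingSign_mul_self A i

theorem seidelMatrix_mulVec_switchingSign_eq_zero {d : ℕ}
    (hreg : (switchGraph G A).IsRegularOfDegree d) (hn : n = 2 * d + 1) :
    seidelMatrix G *ᵥ switchingSign A = 0 := by
  funext i
  subst hn
  rw [seidelMatrix_mulVec_switchingSign, sum_seidelMatrix_apply, hreg i]
  simp

def oppositeSide (v : Fin n) : Finset (Fin n) := if v ∈ A then Aᶜ else A

lemma degree_switchGraph_add (v : Fin n) :
    (switchGraph G A).degree v + 2 * #(G.neighborFinset v ∩ oppositeSide A v) =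
      G.degree v + #(oppositeSide A v) := by
  set B := oppositeSide A v
  have hnbr : (switchGraph G A).neighborFinset v =
      (G.neighborFinset v \ B) ∪ (B \ G.neighborFinset v) := by
    ext w
    by_cases hv : v ∈ A <;> by_cases hw : w ∈ A <;> by_cases hvw : v = w <;>
      simp [B, oppositeSide, SimpleGraph.mem_neighborFinset, switchGraph_adj, hv, hw, hvw]
  rw [← SimpleGraph.card_neighborFinset_eq_degree, hnbr,
    Finset.card_union_of_disjoint disjoint_sdiff_sdiff, ← G.card_neighborFinset_eq_degree,
    ← Finset.card_sdiff_add_card_inter (G.neighborFinset v) B,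
    ← Finset.card_sdiff_add_card_inter B (G.neighborFinset v), Finset.inter_comm B]
  ring

end Switching

section PathsPlusIsolated

variable {k : ℕ}

lemma pathsPlusIsolated_adj {u v : Fin (4 * k + 1)} : (pathsPlusIsolated k).Adj u v ↔
    u.val / 4 = v.val / 4 ∧ (u.val + 1 = v.val ∨ v.val + 1 = u.val) := Iff.rfl

lemma mem_pathLeaves {v : Fin (4 * k + 1)} :
    v ∈ pathLeaves k ↔ v.val < 4 * k ∧ (v.val % 4 = 0 ∨ v.val % 4 = 3) := by
  simp [pathLeaves]

lemma card_pathLeaves : #(pathLeaves k) = 2 * k := by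
  rw [← Finset.card_range (2 * k)]
  refine Finset.card_bij' (fun v _ => v.val / 2)
    (fun i hi => ⟨2 * i + i % 2, by rw [Finset.mem_range] at hi; omega⟩) ?_ ?_ ?_ ?_ <;>
    simp only [mem_pathLeaves, Finset.mem_range, Fin.ext_iff]
  · intro v hv
    omega
  · intro i hi
    obtain ⟨m, rfl | rfl⟩ := Nat.even_or_odd' i <;> omega
  · intro v hv
    omega
  · intro i _
    omega

lemma neighborFinset_last : (pathsPlusIsolated k).neighborFinset (Fin.last (4 * k)) = ∅ := by
  ext w
  simp only [SimpleGraph.mem_neighborFinset, pathsPlusIsolated_adj, Fin.val_last,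
    Finset.notMem_empty, iff_false]
  omega

lemma neighborFinset_of_mod_four_eq_zero {v : Fin (4 * k + 1)} (hv : v.val < 4 * k)
    (h : v.val % 4 = 0) : (pathsPlusIsolated k).neighborFinset v = {⟨v.val + 1, by omega⟩} := by
  ext w
  simp only [SimpleGraph.mem_neighborFinset, pathsPlusIsolated_adj, Finset.mem_singleton,
    Fin.ext_iff]
  omega

lemma neighborFinset_of_mod_four_eq_three {v : Fin (4 * k + 1)} (h : v.val % 4 = 3) :
    (pathsPlusIsolated k).neighborFinset v = {⟨v.val - 1, by omega⟩} := by
  ext w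
  simp only [SimpleGraph.mem_neighborFinset, pathsPlusIsolated_adj, Finset.mem_singleton,
    Fin.ext_iff]
  omega

lemma neighborFinset_of_mod_four_eq_one_or_two {v : Fin (4 * k + 1)}
    (h : v.val % 4 = 1 ∨ v.val % 4 = 2) :
    (pathsPlusIsolated k).neighborFinset v =
      {⟨v.val - 1, by omega⟩, ⟨v.val + 1, by omega⟩} := by
  ext w
  simp only [SimpleGraph.mem_neighborFinset, pathsPlusIsolated_adj, Finset.mem_insert,
    Finset.mem_singleton, Fin.ext_iff]
  omega

lemma degree_add_ite_mem_pathLeaves (v : Fin (4 * k + 1)) :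
    (pathsPlusIsolated k).degree v + (if v ∈ pathLeaves k then 1 else 0) =
      if v = Fin.last (4 * k) then 0 else 2 := by
  rw [← SimpleGraph.card_neighborFinset_eq_degree]
  rcases (by omega : v.val = 4 * k ∨ (v.val < 4 * k ∧ v.val % 4 = 0) ∨ v.val % 4 = 3 ∨
    v.val % 4 = 1 ∨ v.val % 4 = 2) with hlast | ⟨hv, h⟩ | h | h
  · obtain rfl : v = Fin.last (4 * k) := Fin.ext hlast
    simp [neighborFinset_last, mem_pathLeaves]
  · rw [neighborFinset_of_mod_four_eq_zero hv h]
    simp only [Finset.card_singleton, mem_pathLeaves, Fin.ext_iff, Fin.val_last]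
    split_ifs <;> omega
  · rw [neighborFinset_of_mod_four_eq_three h]
    simp only [Finset.card_singleton, mem_pathLeaves, Fin.ext_iff, Fin.val_last]
    split_ifs <;> omega
  · rw [neighborFinset_of_mod_four_eq_one_or_two h, Finset.card_pair (by simp [Fin.ext_iff])]
    simp only [mem_pathLeaves, Fin.ext_iff, Fin.val_last]
    split_ifs <;> omega

-- The only neighbour across the cut is the partner of `v` in the matching
-- `{4i, 4i+1}, {4i+2, 4i+3}`.
lemma neighborFinset_inter_oppositeSide {v : Fin (4 * k + 1)} (hv : v ≠ Fin.last (4 * k)) :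
    (pathsPlusIsolated k).neighborFinset v ∩ oppositeSide (pathLeaves k) v =
      {⟨v.val + 1 - 2 * (v.val % 2), by rw [Ne, Fin.ext_iff, Fin.val_last] at hv; omega⟩} := by
  rw [Ne, Fin.ext_iff, Fin.val_last] at hv
  ext w
  unfold oppositeSide
  split_ifs with hA <;>
    simp only [mem_pathLeaves, Finset.mem_inter, Finset.mem_compl, SimpleGraph.mem_neighborFinset,
      pathsPlusIsolated_adj, Finset.mem_singleton, Fin.ext_iff] at hA ⊢ <;>
    omega

lemma degree_of_mem_pathLeaves {v : Fin (4 * k + 1)} (hv : v ∈ pathLeaves k) :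
    (pathsPlusIsolated k).degree v = 1 := by
  have hdeg := degree_add_ite_mem_pathLeaves v
  have hlast : v ≠ Fin.last (4 * k) := by
    rw [mem_pathLeaves] at hv
    rw [Ne, Fin.ext_iff, Fin.val_last]
    omega
  rw [if_pos hv, if_neg hlast] at hdeg
  omega

lemma card_edgeFinset_pathsPlusIsolated : #(pathsPlusIsolated k).edgeFinset = 3 * k := by
  have hsum := Finset.sum_congr rfl fun v (_ : v ∈ Finset.univ) =>
    degree_add_ite_mem_pathLeaves (k := k) v
  rw [Finset.sum_add_distrib, SimpleGraph.sum_degrees_eq_twice_card_edges, Finset.sum_boole,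
    Finset.filter_mem_eq_inter, Finset.univ_inter, Fin.sum_univ_castSucc] at hsum
  simp only [Fin.castSucc_ne_last, if_false, if_true, Finset.sum_const, Finset.card_univ,
    Fintype.card_fin, smul_eq_mul, card_pathLeaves, Nat.cast_id] at hsum
  omega

lemma switchGraph_pathsPlusIsolated_isRegularOfDegree :
    (switchGraph (pathsPlusIsolated k) (pathLeaves k)).IsRegularOfDegree (2 * k) := by
  intro v
  have hswitch := degree_switchGraph_add (pathsPlusIsolated k) (pathLeaves k) v
  have hdeg := degree_add_ite_mem_pathLeaves v
  have hcross : #((pathsPlusIsolated k).neighborFinset v ∩ oppositeSide (pathLeaves k) v) =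
      if v = Fin.last (4 * k) then 0 else 1 := by
    by_cases hlast : v = Fin.last (4 * k)
    · subst hlast
      simp [neighborFinset_last]
    · rw [if_neg hlast, neighborFinset_inter_oppositeSide hlast, Finset.card_singleton]
  rw [hcross, oppositeSide, apply_ite Finset.card, Finset.card_compl, card_pathLeaves,
    Fintype.card_fin] at hswitch
  split_ifs at hswitch hdeg <;> omega

end PathsPlusIsolated

theorem pathsPlusIsolated_switch_regular_general (k : ℕ) :
    (pathsPlusIsolated k).edgeFinset.card = 3 * k ∧
    (pathLeaves k).card = 2 * k ∧
    (∀ v ∈ pathLeaves k, (pathsPlusIsolated k).degree v = 1) ∧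
    (∀ v, (switchGraph (pathsPlusIsolated k) (pathLeaves k)).degree v = 2 * k) ∧
    (seidelMatrix (pathsPlusIsolated k)).det = 0 ∧
    ∃ φ : Fin (4 * k + 1) → ℤ, (∀ i, φ i = 1 ∨ φ i = -1) ∧
      (seidelMatrix (pathsPlusIsolated k)).mulVec φ = 0 := by
  have hker : seidelMatrix (pathsPlusIsolated k) *ᵥ switchingSign (pathLeaves k) = 0 :=
    seidelMatrix_mulVec_switchingSign_eq_zero _ _
      switchGraph_pathsPlusIsolated_isRegularOfDegree (by ring)
  refine ⟨card_edgeFinset_pathsPlusIsolated, card_pathLeaves, fun v => degree_of_mem_pathLeaves,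
    switchGraph_pathsPlusIsolated_isRegularOfDegree, ?_,
    switchingSign (pathLeaves k), switchingSign_eq_one_or_eq_neg_one _, hker⟩
  exact Matrix.exists_mulVec_eq_zero_iff.mp ⟨_, switchingSign_ne_zero _, hker⟩

theorem pathsPlusIsolated_switch_regular (k : ℕ) (hk : 1 ≤ k) :
    (pathsPlusIsolated k).edgeFinset.card = 3 * k ∧
    (pathLeaves k).card = 2 * k ∧
    (∀ v ∈ pathLeaves k, (pathsPlusIsolated k).degree v = 1) ∧
    (∀ v, (switchGraph (pathsPlusIsolated k) (pathLeaves k)).degree v = 2 * k) ∧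
    (seidelMatrix (pathsPlusIsolated k)).det = 0 ∧
    ∃ φ : Fin (4 * k + 1) → ℤ, (∀ i, φ i = 1 ∨ φ i = -1) ∧
      (seidelMatrix (pathsPlusIsolated k)).mulVec φ = 0 :=
  pathsPlusIsolated_switch_regular_general k
end
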